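/- arXiv:1709.10354 — 4 statements merged into one kernel-verified Lean document; each statement's English description precedes it below -/
import Mathlib

section
/- Let z̃ : ℝ² → ℝ be differentiable and strictly positive at a point (x, y), let f̃ > 0 and (x₀, y₀) ∈ ℝ², and define the perspective surface parameterization 𝐱(u, v) = z̃(u, v)·((u − x₀)/f̃, (v − y₀)/f̃, 1) ∈ ℝ³. Setting z = log ∘ z̃, x̃ = x − x₀, ỹ = y − y₀, the cross product of the partial derivatives satisfies 𝐱ₓ(x,y) × 𝐱_y(x,y) = −(z̃(x,y)²/f̃²)·( f̃·∂ₓz(x,y), f̃·∂_y z(x,y), −(1 + x̃·∂ₓz(x,y) + ỹ·∂_y z(x,y)) ). -/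
/-- Let `z̃ : ℝ² → ℝ` be differentiable and strictly positive at `(x, y)`,
let `f̃ > 0` and `(x₀, y₀) ∈ ℝ²`, and define the perspective surface parameterization
`𝐱(u, v) = z̃(u, v)·((u − x₀)/f̃, (v − y₀)/f̃, 1) ∈ ℝ³`. Setting `z = log ∘ z̃`,
`x̃ = x − x₀`, `ỹ = y − y₀`, the cross product of the partial derivatives satisfies
`𝐱ₓ(x,y) × 𝐱_y(x,y) = −(z̃(x,y)²/f̃²)·(f̃·∂ₓz, f̃·∂_y z, −(1 + x̃·∂ₓz + ỹ·∂_y z))`.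
(Here `zt = z̃`, `ft = f̃`, `xt = x̃`, `yt = ỹ`.) -/
theorem perspective_cross_product (zt : ℝ × ℝ → ℝ) (x y x₀ y₀ ft : ℝ) (hft : 0 < ft)
    (hz : DifferentiableAt ℝ zt (x, y)) (hpos : 0 < zt (x, y))
    (X : ℝ × ℝ → Fin 3 → ℝ)
    (hX : X = fun p => ![zt p * ((p.1 - x₀) / ft), zt p * ((p.2 - y₀) / ft), zt p])
    (z : ℝ × ℝ → ℝ) (hzdef : z = Real.log ∘ zt)
    (zx zy : ℝ) (hzx : zx = fderiv ℝ z (x, y) (1, 0)) (hzy : zy = fderiv ℝ z (x, y) (0, 1))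
    (xt yt : ℝ) (hxt : xt = x - x₀) (hyt : yt = y - y₀) :
    crossProduct (fderiv ℝ X (x, y) (1, 0)) (fderiv ℝ X (x, y) (0, 1)) =
      (-(zt (x, y) ^ 2 / ft ^ 2)) • ![ft * zx, ft * zy, -(1 + xt * zx + yt * zy)] := by
  set L := fderiv ℝ zt (x, y) with hL
  have hz' : HasFDerivAt zt L (x, y) := hz.hasFDerivAt
  set c := zt (x, y) with hc
  set a := L (1, 0) with ha
  set b := L (0, 1) with hb
  have hcne : c ≠ 0 := ne_of_gt hpos
  have hftne : ft ≠ 0 := ne_of_gt hft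
  -- derivative of z = log ∘ zt
  have hlog : HasFDerivAt z (c⁻¹ • L) (x, y) := by
    rw [hzdef]
    exact (Real.hasDerivAt_log hcne).comp_hasFDerivAt (x, y) hz'
  have hzx' : zx = c⁻¹ * a := by
    rw [hzx, hlog.fderiv]; simp [ha]
  have hzy' : zy = c⁻¹ * b := by
    rw [hzy, hlog.fderiv]; simp [hb]
  -- derivatives of the coordinate helper functions
  have hg0 : HasFDerivAt (fun p : ℝ × ℝ => (p.1 - x₀) / ft)
      (ft⁻¹ • ContinuousLinearMap.fst ℝ ℝ ℝ) (x, y) := by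
    simp only [div_eq_mul_inv]
    exact (hasFDerivAt_fst.sub_const x₀).mul_const ft⁻¹
  have hg1 : HasFDerivAt (fun p : ℝ × ℝ => (p.2 - y₀) / ft)
      (ft⁻¹ • ContinuousLinearMap.snd ℝ ℝ ℝ) (x, y) := by
    simp only [div_eq_mul_inv]
    exact (hasFDerivAt_snd.sub_const y₀).mul_const ft⁻¹
  have hf0 : HasFDerivAt (fun p : ℝ × ℝ => zt p * ((p.1 - x₀) / ft))
      (c • (ft⁻¹ • ContinuousLinearMap.fst ℝ ℝ ℝ) + ((x - x₀) / ft) • L) (x, y) :=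
    hz'.mul hg0
  have hf1 : HasFDerivAt (fun p : ℝ × ℝ => zt p * ((p.2 - y₀) / ft))
      (c • (ft⁻¹ • ContinuousLinearMap.snd ℝ ℝ ℝ) + ((y - y₀) / ft) • L) (x, y) :=
    hz'.mul hg1
  -- the full derivative of X
  set Φ' : Fin 3 → (ℝ × ℝ →L[ℝ] ℝ) :=
    ![c • (ft⁻¹ • ContinuousLinearMap.fst ℝ ℝ ℝ) + ((x - x₀) / ft) • L,
      c • (ft⁻¹ • ContinuousLinearMap.snd ℝ ℝ ℝ) + ((y - y₀) / ft) • L, L] with hΦ'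
  have hXd : HasFDerivAt X (ContinuousLinearMap.pi Φ') (x, y) := by
    have hX' : X = fun p i => (![fun p : ℝ × ℝ => zt p * ((p.1 - x₀) / ft),
        fun p : ℝ × ℝ => zt p * ((p.2 - y₀) / ft), zt] : Fin 3 → (ℝ × ℝ → ℝ)) i p := by
      rw [hX]; funext p i; fin_cases i <;> rfl
    rw [hX']
    refine hasFDerivAt_pi.2 fun i => ?_
    fin_cases i
    · exact hf0
    · exact hf1
    · exact hz'
  have hfd : fderiv ℝ X (x, y) = ContinuousLinearMap.pi Φ' := hXd.fderiv
  have e1 : fderiv ℝ X (x, y) (1, 0) = ![c * ft⁻¹ + (x - x₀) / ft * a, (y - y₀) / ft * a, a] := by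
    rw [hfd]; funext i; fin_cases i <;>
      simp [hΦ', ContinuousLinearMap.pi_apply, ha]
  have e2 : fderiv ℝ X (x, y) (0, 1) = ![(x - x₀) / ft * b, c * ft⁻¹ + (y - y₀) / ft * b, b] := by
    rw [hfd]; funext i; fin_cases i <;>
      simp [hΦ', ContinuousLinearMap.pi_apply, hb]
  rw [e1, e2, hzx', hzy', hxt, hyt]
  funext i
  fin_cases i <;>
    · simp [crossProduct]
      field_simp
      ring
end

section
/- Let z̃ : ℝ² → ℝ be differentiable and strictly positive at (x, y), let f̃ > 0 and (x₀, y₀) ∈ ℝ², and let 𝐱(u, v) = z̃(u, v)·((u − x₀)/f̃, (v − y₀)/f̃, 1) be the perspective parameterization. Setting z = log ∘ z̃, x̃ = x − x₀, ỹ = y − y₀, one has ‖𝐱ₓ(x,y) × 𝐱_y(x,y)‖ = (z̃(x,y)²/f̃²) · √( f̃²·((∂ₓz(x,y))² + (∂_y z(x,y))²) + (1 + x̃·∂ₓz(x,y) + ỹ·∂_y z(x,y))² ). -/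
/-!
Write `𝐱 = z̃ · r` with `r(u, v) = ((u - x₀)/f̃, (v - y₀)/f̃, 1)`. Then
`𝐱ₓ = z̃ₓ r + (z̃/f̃) e₁` and `𝐱_y = z̃_y r + (z̃/f̃) e₂`, and `z̃ₓ = z̃ ∂ₓz`, `z̃_y = z̃ ∂_y z`
because `z = log z̃`. Expanding the cross product gives
`𝐱ₓ × 𝐱_y = (z̃²/f̃²) · (-f̃ ∂ₓz, -f̃ ∂_y z, 1 + x̃ ∂ₓz + ỹ ∂_y z)`, whose norm is the claim.
-/

open WithLp

theorem PiLp.fderiv_apply_apply {𝕜 ι H : Type*} {E : ι → Type*} [NontriviallyNormedField 𝕜]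
    [NormedAddCommGroup H] [NormedSpace 𝕜 H] [∀ i, NormedAddCommGroup (E i)]
    [∀ i, NormedSpace 𝕜 (E i)] [Fintype ι] {p : ENNReal} [Fact (1 ≤ p)] {f : H → PiLp p E} {y : H}
    (hf : DifferentiableAt 𝕜 f y) (v : H) (i : ι) :
    fderiv 𝕜 f y v i = fderiv 𝕜 (fun x => f x i) y v := by
  change _ = fderiv 𝕜 ((fun g : PiLp p E => g i) ∘ f) y v
  rw [((PiLp.hasFDerivAt_apply p (f y) i).comp y hf.hasFDerivAt).fderiv]
  rfl

noncomputable def perspectiveMap (zt : ℝ × ℝ → ℝ) (x₀ y₀ f : ℝ) (q : ℝ × ℝ) :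
    EuclideanSpace ℝ (Fin 3) :=
  (WithLp.equiv 2 (Fin 3 → ℝ)).symm ![zt q * ((q.1 - x₀) / f), zt q * ((q.2 - y₀) / f), zt q]

theorem fderiv_perspectiveMap_apply {zt : ℝ × ℝ → ℝ} {p : ℝ × ℝ} (hz : DifferentiableAt ℝ zt p)
    (x₀ y₀ f : ℝ) (v : ℝ × ℝ) :
    fderiv ℝ (perspectiveMap zt x₀ y₀ f) p v = toLp 2
      ![fderiv ℝ zt p v * ((p.1 - x₀) / f) + zt p * (v.1 / f),
        fderiv ℝ zt p v * ((p.2 - y₀) / f) + zt p * (v.2 / f), fderiv ℝ zt p v] := by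
  have hdiff : DifferentiableAt ℝ (perspectiveMap zt x₀ y₀ f) p := by
    refine (differentiableAt_piLp 2).2 fun i => ?_
    fin_cases i <;>
      simp only [perspectiveMap, equiv_symm_apply, PiLp.toLp_apply, Fin.zero_eta, Fin.mk_one,
        Fin.reduceFinMk, Matrix.cons_val_zero, Matrix.cons_val_one, Matrix.cons_val] <;>
      fun_prop
  ext i
  rw [PiLp.fderiv_apply_apply hdiff]
  fin_cases i
  · simp only [perspectiveMap, equiv_symm_apply, PiLp.toLp_apply, Fin.zero_eta,
      Matrix.cons_val_zero, div_eq_mul_inv]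
    rw [fderiv_fun_mul hz (by fun_prop), fderiv_mul_const (by fun_prop), fderiv_sub_const,
      fderiv_fst]
    simp only [add_apply, smul_apply, ContinuousLinearMap.coe_fst', smul_eq_mul]
    ring
  · simp only [perspectiveMap, equiv_symm_apply, PiLp.toLp_apply, Fin.mk_one,
      Matrix.cons_val_one, Matrix.cons_val_zero, div_eq_mul_inv]
    rw [fderiv_fun_mul hz (by fun_prop), fderiv_mul_const (by fun_prop), fderiv_sub_const,
      fderiv_snd]
    simp only [add_apply, smul_apply, ContinuousLinearMap.coe_snd', smul_eq_mul]
    ring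
  · simp only [perspectiveMap, equiv_symm_apply, PiLp.toLp_apply, Fin.reduceFinMk, Matrix.cons_val]

theorem fderiv_apply_eq_mul_fderiv_log_comp_apply {E : Type*} [NormedAddCommGroup E]
    [NormedSpace ℝ E] {f : E → ℝ} {x : E} (hf : DifferentiableAt ℝ f x) (hx : f x ≠ 0) (v : E) :
    fderiv ℝ f x v = f x * fderiv ℝ (Real.log ∘ f) x v := by
  simp [Function.comp_def, fderiv.log hf hx, hx]

theorem EuclideanSpace.norm_toLp_vec3 (a b c : ℝ) :
    ‖toLp 2 ![a, b, c]‖ = √(a ^ 2 + b ^ 2 + c ^ 2) := by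
  simp [EuclideanSpace.norm_eq, Fin.sum_univ_three]

open Matrix in
theorem cross_perspective_tangents (z f s t a b : ℝ) :
    ![z * a * (s / f) + z * (1 / f), z * a * (t / f), z * a] ⨯₃
        ![z * b * (s / f), z * b * (t / f) + z * (1 / f), z * b] =
      (z ^ 2 / f ^ 2) • ![-(f * a), -(f * b), 1 + s * a + t * b] := by
  rcases eq_or_ne f 0 with rfl | hf
  · -- with `1 / 0 = 0` both sides vanish
    simp [cross_apply]
  · rw [cross_apply, smul_vec3]
    refine vec3_eq ?_ ?_ ?_ <;>
      simp only [cons_val_zero, cons_val_one, cons_val_two, tail_cons, head_cons, smul_eq_mul] <;>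
      field_simp <;> ring

theorem perspective_area_element_general (zt : ℝ × ℝ → ℝ) (x y x₀ y₀ ft : ℝ)
    (hz : DifferentiableAt ℝ zt (x, y)) (hpos : 0 < zt (x, y))
    (X : ℝ × ℝ → EuclideanSpace ℝ (Fin 3))
    (hX : X = fun p => (WithLp.equiv 2 (Fin 3 → ℝ)).symm
      ![zt p * ((p.1 - x₀) / ft), zt p * ((p.2 - y₀) / ft), zt p])
    (z : ℝ × ℝ → ℝ) (hzdef : z = Real.log ∘ zt)
    (zx zy : ℝ) (hzx : zx = fderiv ℝ z (x, y) (1, 0)) (hzy : zy = fderiv ℝ z (x, y) (0, 1))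
    (xt yt : ℝ) (hxt : xt = x - x₀) (hyt : yt = y - y₀) :
    ‖(WithLp.equiv 2 (Fin 3 → ℝ)).symm
        (crossProduct (fderiv ℝ X (x, y) (1, 0)) (fderiv ℝ X (x, y) (0, 1)))‖ =
      (zt (x, y) ^ 2 / ft ^ 2) *
        Real.sqrt (ft ^ 2 * (zx ^ 2 + zy ^ 2) + (1 + xt * zx + yt * zy) ^ 2) := by
  have hX' : X = perspectiveMap zt x₀ y₀ ft := hX
  have hzx' : fderiv ℝ zt (x, y) (1, 0) = zt (x, y) * zx := by
    rw [hzx, hzdef, fderiv_apply_eq_mul_fderiv_log_comp_apply hz hpos.ne']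
  have hzy' : fderiv ℝ zt (x, y) (0, 1) = zt (x, y) * zy := by
    rw [hzy, hzdef, fderiv_apply_eq_mul_fderiv_log_comp_apply hz hpos.ne']
  subst hxt hyt
  rw [hX', fderiv_perspectiveMap_apply hz, fderiv_perspectiveMap_apply hz, hzx', hzy']
  simp only [zero_div, mul_zero, add_zero]
  rw [cross_perspective_tangents, WithLp.equiv_symm_apply, WithLp.toLp_smul, norm_smul,
    Real.norm_of_nonneg (by positivity), EuclideanSpace.norm_toLp_vec3]
  congr 2
  ring

/-- Let `z̃ : ℝ² → ℝ` be differentiable and strictly positive at `(x, y)`,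
let `f̃ > 0` and `(x₀, y₀) ∈ ℝ²`, and let
`𝐱(u, v) = z̃(u, v)·((u − x₀)/f̃, (v − y₀)/f̃, 1)` be the perspective parameterization.
Setting `z = log ∘ z̃`, `x̃ = x − x₀`, `ỹ = y − y₀`, one has
`‖𝐱ₓ × 𝐱_y‖ = (z̃(x,y)²/f̃²)·√(f̃²·((∂ₓz)² + (∂_y z)²) + (1 + x̃·∂ₓz + ỹ·∂_y z)²)`.
(Here `zt = z̃`, `ft = f̃`, `xt = x̃`, `yt = ỹ`.) -/
theorem perspective_area_element (zt : ℝ × ℝ → ℝ) (x y x₀ y₀ ft : ℝ) (hft : 0 < ft)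
    (hz : DifferentiableAt ℝ zt (x, y)) (hpos : 0 < zt (x, y))
    (X : ℝ × ℝ → EuclideanSpace ℝ (Fin 3))
    (hX : X = fun p => (WithLp.equiv 2 (Fin 3 → ℝ)).symm
      ![zt p * ((p.1 - x₀) / ft), zt p * ((p.2 - y₀) / ft), zt p])
    (z : ℝ × ℝ → ℝ) (hzdef : z = Real.log ∘ zt)
    (zx zy : ℝ) (hzx : zx = fderiv ℝ z (x, y) (1, 0)) (hzy : zy = fderiv ℝ z (x, y) (0, 1))
    (xt yt : ℝ) (hxt : xt = x - x₀) (hyt : yt = y - y₀) :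
    ‖(WithLp.equiv 2 (Fin 3 → ℝ)).symm
        (crossProduct (fderiv ℝ X (x, y) (1, 0)) (fderiv ℝ X (x, y) (0, 1)))‖ =
      (zt (x, y) ^ 2 / ft ^ 2) *
        Real.sqrt (ft ^ 2 * (zx ^ 2 + zy ^ 2) + (1 + xt * zx + yt * zy) ^ 2) :=
  perspective_area_element_general zt x y x₀ y₀ ft hz hpos X hX z hzdef zx zy hzx hzy xt yt hxt hyt
end

section
/- Let Ω ⊆ ℝ², let f̃ > 0, (x₀, y₀) ∈ ℝ², and let z̃ : ℝ² → ℝ be strictly positive and differentiable on Ω; set z = log ∘ z̃. At each (x, y) ∈ Ω write x̃ = x − x₀, ỹ = y − y₀, d(x,y) = √( f̃²‖∇z(x,y)‖² + (1 + x̃·∂ₓz(x,y) + ỹ·∂_y z(x,y))² ), and n(x,y) = (1/d(x,y))·( f̃·∂ₓz(x,y), f̃·∂_y z(x,y), −(1 + x̃·∂ₓz(x,y) + ỹ·∂_y z(x,y)) ). Then for every channel c, every albedo ρᶜ : Ω → ℝ and lighting lᶜ ∈ ℝ⁹, the image Iᶜ(x,y) = ρᶜ(x,y)·lᶜ·(n₁,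 n₂, n₃, 1, n₁n₂, n₁n₃, n₂n₃, n₁² − n₂², 3n₃² − 1)ᵀ(x,y) satisfies at every (x, y) ∈ Ω the PDE 𝐚ᶜ(x,y)·∇z(x,y) + bᶜ(x,y) = Iᶜ(x,y), where 𝐚ᶜ = (ρᶜ/d)·( f̃·l₁ᶜ − x̃·l₃ᶜ, f̃·l₂ᶜ − ỹ·l₃ᶜ ) and bᶜ = ρᶜ·( −l₃ᶜ/d + l₄ᶜ + l₅ᶜ·f̃²·∂ₓz·∂_y z/d² + l₆ᶜ·f̃·∂ₓz·(−1 − x̃∂ₓz − ỹ∂_y z)/d² + l₇ᶜ·f̃·∂_y z·(−1 − x̃∂ₓz − ỹ∂_y z)/d² + l₈ᶜ·f̃²((∂ₓz)² − (∂_y z)²)/d² + l₉ᶜ·(3(1 + x̃∂ₓz + ỹ∂_y z)²/d² − 1) ). -/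
/-- Partial derivative of `z` in the `x`-direction. -/
noncomputable def zx (z : ℝ × ℝ → ℝ) (p : ℝ × ℝ) : ℝ := fderiv ℝ z p (1, 0)

/-- Partial derivative of `z` in the `y`-direction. -/
noncomputable def zy (z : ℝ × ℝ → ℝ) (p : ℝ × ℝ) : ℝ := fderiv ℝ z p (0, 1)

/-- Perspective normalization factor
`d = √(f̃²‖∇z‖² + (1 + (x − x₀)·∂ₓz + (y − y₀)·∂_y z)²)`. -/
noncomputable def dP (ft x₀ y₀ : ℝ) (z : ℝ × ℝ → ℝ) (p : ℝ × ℝ) : ℝ :=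
  Real.sqrt (ft ^ 2 * ((zx z p) ^ 2 + (zy z p) ^ 2)
    + (1 + (p.1 - x₀) * zx z p + (p.2 - y₀) * zy z p) ^ 2)

/-- First component of the perspective unit normal. -/
noncomputable def n1P (ft x₀ y₀ : ℝ) (z : ℝ × ℝ → ℝ) (p : ℝ × ℝ) : ℝ :=
  ft * zx z p / dP ft x₀ y₀ z p

/-- Second component of the perspective unit normal. -/
noncomputable def n2P (ft x₀ y₀ : ℝ) (z : ℝ × ℝ → ℝ) (p : ℝ × ℝ) : ℝ :=
  ft * zy z p / dP ft x₀ y₀ z p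

/-- Third component of the perspective unit normal. -/
noncomputable def n3P (ft x₀ y₀ : ℝ) (z : ℝ × ℝ → ℝ) (p : ℝ × ℝ) : ℝ :=
  -(1 + (p.1 - x₀) * zx z p + (p.2 - y₀) * zy z p) / dP ft x₀ y₀ z p

theorem sfs_pde_perspective_general (Ω : Set (ℝ × ℝ)) (ft x₀ y₀ : ℝ)
    (z : ℝ × ℝ → ℝ)
    (C : ℕ) (ρ : Fin C → ℝ × ℝ → ℝ) (l : Fin C → Fin 9 → ℝ) (I : Fin C → ℝ × ℝ → ℝ)
    (hI : ∀ c : Fin C, ∀ p ∈ Ω,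
      I c p = ρ c p * (l c 0 * n1P ft x₀ y₀ z p + l c 1 * n2P ft x₀ y₀ z p
        + l c 2 * n3P ft x₀ y₀ z p + l c 3
        + l c 4 * (n1P ft x₀ y₀ z p * n2P ft x₀ y₀ z p)
        + l c 5 * (n1P ft x₀ y₀ z p * n3P ft x₀ y₀ z p)
        + l c 6 * (n2P ft x₀ y₀ z p * n3P ft x₀ y₀ z p)
        + l c 7 * ((n1P ft x₀ y₀ z p) ^ 2 - (n2P ft x₀ y₀ z p) ^ 2)
        + l c 8 * (3 * (n3P ft x₀ y₀ z p) ^ 2 - 1))) :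
    ∀ c : Fin C, ∀ p ∈ Ω,
      (ρ c p / dP ft x₀ y₀ z p * (ft * l c 0 - (p.1 - x₀) * l c 2)) * zx z p
      + (ρ c p / dP ft x₀ y₀ z p * (ft * l c 1 - (p.2 - y₀) * l c 2)) * zy z p
      + ρ c p * (-(l c 2) / dP ft x₀ y₀ z p + l c 3
        + l c 4 * (ft ^ 2 * zx z p * zy z p) / (dP ft x₀ y₀ z p) ^ 2
        + l c 5 * (ft * zx z p * (-1 - (p.1 - x₀) * zx z p - (p.2 - y₀) * zy z p))
            / (dP ft x₀ y₀ z p) ^ 2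
        + l c 6 * (ft * zy z p * (-1 - (p.1 - x₀) * zx z p - (p.2 - y₀) * zy z p))
            / (dP ft x₀ y₀ z p) ^ 2
        + l c 7 * (ft ^ 2 * ((zx z p) ^ 2 - (zy z p) ^ 2)) / (dP ft x₀ y₀ z p) ^ 2
        + l c 8 * (3 * (1 + (p.1 - x₀) * zx z p + (p.2 - y₀) * zy z p) ^ 2
            / (dP ft x₀ y₀ z p) ^ 2 - 1))
      = I c p := by
  intro c p hp
  -- both sides are polynomials in `zx z p`, `zy z p` and `(dP ft x₀ y₀ z p)⁻¹`
  rw [hI c p hp, n1P, n2P, n3P]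
  ring

/-- Under perspective projection with focal length `f̃ > 0` (here `ft`)
and principal point `(x₀, y₀)`, for a strictly positive depth map `z̃` (here `zt`)
differentiable on `Ω`, log-depth `z = log ∘ z̃`, any channel `c`, albedo `ρᶜ` and
lighting `lᶜ ∈ ℝ⁹` (indexed by `Fin 9`, so `l c 0 = l₁ᶜ`, …, `l c 8 = l₉ᶜ`), the image
`Iᶜ = ρᶜ·lᶜ·(n₁, n₂, n₃, 1, n₁n₂, n₁n₃, n₂n₃, n₁² − n₂², 3n₃² − 1)ᵀ` satisfies the PDE
`𝐚ᶜ·∇z + bᶜ = Iᶜ` on `Ω`, with `𝐚ᶜ = (ρᶜ/d)·(f̃·l₁ᶜ − x̃·l₃ᶜ, f̃·l₂ᶜ − ỹ·l₃ᶜ)`,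
`x̃ = x − x₀`, `ỹ = y − y₀`, and `bᶜ` as stated. -/
theorem sfs_pde_perspective (Ω : Set (ℝ × ℝ)) (ft x₀ y₀ : ℝ) (hft : 0 < ft)
    (zt : ℝ × ℝ → ℝ) (hpos : ∀ p ∈ Ω, 0 < zt p)
    (hzt : ∀ p ∈ Ω, DifferentiableAt ℝ zt p)
    (z : ℝ × ℝ → ℝ) (hz : z = Real.log ∘ zt)
    (C : ℕ) (ρ : Fin C → ℝ × ℝ → ℝ) (l : Fin C → Fin 9 → ℝ) (I : Fin C → ℝ × ℝ → ℝ)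
    (hI : ∀ c : Fin C, ∀ p ∈ Ω,
      I c p = ρ c p * (l c 0 * n1P ft x₀ y₀ z p + l c 1 * n2P ft x₀ y₀ z p
        + l c 2 * n3P ft x₀ y₀ z p + l c 3
        + l c 4 * (n1P ft x₀ y₀ z p * n2P ft x₀ y₀ z p)
        + l c 5 * (n1P ft x₀ y₀ z p * n3P ft x₀ y₀ z p)
        + l c 6 * (n2P ft x₀ y₀ z p * n3P ft x₀ y₀ z p)
        + l c 7 * ((n1P ft x₀ y₀ z p) ^ 2 - (n2P ft x₀ y₀ z p) ^ 2)
        + l c 8 * (3 * (n3P ft x₀ y₀ z p) ^ 2 - 1))) :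
    ∀ c : Fin C, ∀ p ∈ Ω,
      (ρ c p / dP ft x₀ y₀ z p * (ft * l c 0 - (p.1 - x₀) * l c 2)) * zx z p
      + (ρ c p / dP ft x₀ y₀ z p * (ft * l c 1 - (p.2 - y₀) * l c 2)) * zy z p
      + ρ c p * (-(l c 2) / dP ft x₀ y₀ z p + l c 3
        + l c 4 * (ft ^ 2 * zx z p * zy z p) / (dP ft x₀ y₀ z p) ^ 2
        + l c 5 * (ft * zx z p * (-1 - (p.1 - x₀) * zx z p - (p.2 - y₀) * zy z p))
            / (dP ft x₀ y₀ z p) ^ 2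
        + l c 6 * (ft * zy z p * (-1 - (p.1 - x₀) * zx z p - (p.2 - y₀) * zy z p))
            / (dP ft x₀ y₀ z p) ^ 2
        + l c 7 * (ft ^ 2 * ((zx z p) ^ 2 - (zy z p) ^ 2)) / (dP ft x₀ y₀ z p) ^ 2
        + l c 8 * (3 * (1 + (p.1 - x₀) * zx z p + (p.2 - y₀) * zy z p) ^ 2
            / (dP ft x₀ y₀ z p) ^ 2 - 1))
      = I c p :=
  sfs_pde_perspective_general Ω ft x₀ y₀ z C ρ l I hI
end

section
/- Let z̃ : ℝ² → ℝ be differentiable and strictly positive at (x, y), let f̃ > 0 and (x₀, y₀) ∈ ℝ², and let 𝐱(u, v) = z̃(u, v)·((u − x₀)/f̃, (v − y₀)/f̃, 1). Set z = log ∘ z̃, x̃ = x − x₀, ỹ = y − y₀, d = √( f̃²((∂ₓz)² + (∂_y z)²) + (1 + x̃·∂ₓz + ỹ·∂_y z)² ) evaluated at (x, y), and n = (1/d)·( f̃·∂ₓz(x,y), f̃·∂_y z(x,y), −(1 + x̃·∂ₓz(x,y) + ỹ·∂_y z(x,y)) ). Then n is a unit vector orthogonal to both tangent vectors 𝐱ₓ(x,y)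 and 𝐱_y(x,y), and n is a negative scalar multiple of 𝐱ₓ(x,y) × 𝐱_y(x,y) (namely n = −(f̃²/(z̃(x,y)²·d))·(𝐱ₓ(x,y) × 𝐱_y(x,y))). -/
/-! By the product rule, and writing `∂z̃ = z̃ ∂z`, the tangent vectors are
`𝐱ₓ = (z̃/f̃)·(1 + x̃ zₓ, ỹ zₓ, f̃ zₓ)` and `𝐱_y = (z̃/f̃)·(x̃ z_y, 1 + ỹ z_y, f̃ z_y)`.
A direct computation gives `𝐱ₓ × 𝐱_y = -(z̃/f̃)² · m` with `m = (f̃ zₓ, f̃ z_y, -(1 + x̃ zₓ + ỹ z_y))`,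
and `d = ‖m‖`, which is nonzero because `m` has last entry `-1` when `zₓ = z_y = 0`.
Orthogonality is inherited from the cross product. -/

open Matrix
open scoped RealInnerProductSpace

theorem fderiv_piLp_apply {𝕜 ι H : Type*} {E : ι → Type*} [NontriviallyNormedField 𝕜]
    [NormedAddCommGroup H] [NormedSpace 𝕜 H] [∀ i, NormedAddCommGroup (E i)]
    [∀ i, NormedSpace 𝕜 (E i)] [Fintype ι] {p : ENNReal} [Fact (1 ≤ p)] {f : H → PiLp p E}
    {y : H} (hf : DifferentiableAt 𝕜 f y) (w : H) (i : ι) :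
    fderiv 𝕜 f y w i = fderiv 𝕜 (fun x => f x i) y w :=
  (DFunLike.congr_fun ((PiLp.proj (𝕜 := 𝕜) p E i).hasFDerivAt.comp y hf.hasFDerivAt).fderiv w).symm

noncomputable def perspectiveSurface (zt : ℝ × ℝ → ℝ) (x₀ y₀ f : ℝ) (p : ℝ × ℝ) :
    EuclideanSpace ℝ (Fin 3) :=
  !₂[zt p * ((p.1 - x₀) / f), zt p * ((p.2 - y₀) / f), zt p]

noncomputable def perspectiveNormal (f xt yt zx zy : ℝ) : EuclideanSpace ℝ (Fin 3) :=
  !₂[f * zx, f * zy, -(1 + xt * zx + yt * zy)]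

section PerspectiveSurface

variable {zt : ℝ × ℝ → ℝ} {x₀ y₀ f : ℝ} {p : ℝ × ℝ}

theorem differentiableAt_perspectiveSurface (hz : DifferentiableAt ℝ zt p) :
    DifferentiableAt ℝ (perspectiveSurface zt x₀ y₀ f) p := by
  rw [differentiableAt_piLp]
  intro i
  fin_cases i <;> simp [perspectiveSurface] <;> fun_prop

theorem fderiv_perspectiveSurface_apply (hz : DifferentiableAt ℝ zt p) (hzp : zt p ≠ 0)
    (hf : f ≠ 0) (w : ℝ × ℝ) :
    fderiv ℝ (perspectiveSurface zt x₀ y₀ f) p w =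
      (zt p / f) • !₂[w.1 + (p.1 - x₀) * fderiv ℝ (Real.log ∘ zt) p w,
        w.2 + (p.2 - y₀) * fderiv ℝ (Real.log ∘ zt) p w, f * fderiv ℝ (Real.log ∘ zt) p w] := by
  have hlog : fderiv ℝ (Real.log ∘ zt) p w = fderiv ℝ zt p w / zt p := by
    rw [show Real.log ∘ zt = fun q => Real.log (zt q) from rfl, fderiv.log hz hzp]
    simp [div_eq_inv_mul]
  ext i
  rw [fderiv_piLp_apply (differentiableAt_perspectiveSurface hz), hlog]
  fin_cases i
  · simp only [perspectiveSurface, Fin.zero_eta, Fin.isValue, Matrix.cons_val_zero,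
      PiLp.smul_apply, smul_eq_mul, PiLp.toLp_apply]
    rw [fderiv_fun_mul hz (by fun_prop)]
    simp [div_eq_mul_inv, fderiv_mul_const, fderiv_sub_const, fderiv_fst]
    field_simp
  · simp only [perspectiveSurface, Fin.mk_one, Fin.isValue, Matrix.cons_val_one,
      Matrix.cons_val_zero, PiLp.smul_apply, smul_eq_mul, PiLp.toLp_apply]
    rw [fderiv_fun_mul hz (by fun_prop)]
    simp [div_eq_mul_inv, fderiv_mul_const, fderiv_sub_const, fderiv_snd]
    field_simp
  · simp [perspectiveSurface]
    field_simp

end PerspectiveSurface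

theorem cross_perspectiveTangents (c f xt yt zx zy : ℝ) :
    WithLp.toLp 2 ((c • !₂[1 + xt * zx, yt * zx, f * zx]).ofLp ⨯₃
      (c • !₂[xt * zy, 1 + yt * zy, f * zy]).ofLp) = -c ^ 2 • perspectiveNormal f xt yt zx zy := by
  ext i
  fin_cases i <;> simp [perspectiveNormal, cross_apply] <;> ring

theorem perspectiveNormal_ne_zero {f : ℝ} (hf : f ≠ 0) (xt yt zx zy : ℝ) :
    perspectiveNormal f xt yt zx zy ≠ 0 := by
  intro h
  have h0 := congrArg (· 0) h
  have h1 := congrArg (· 1) h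
  have h2 := congrArg (· 2) h
  simp_all [perspectiveNormal]

theorem norm_perspectiveNormal (f xt yt zx zy : ℝ) :
    ‖perspectiveNormal f xt yt zx zy‖ =
      √(f ^ 2 * (zx ^ 2 + zy ^ 2) + (1 + xt * zx + yt * zy) ^ 2) := by
  rw [perspectiveNormal, EuclideanSpace.norm_eq, Fin.sum_univ_three]
  congr 1
  simp only [Real.norm_eq_abs, sq_abs]
  simp
  ring

theorem inner_toLp_cross_self_left (u v : EuclideanSpace ℝ (Fin 3)) :
    ⟪WithLp.toLp 2 (u.ofLp ⨯₃ v.ofLp), u⟫ = 0 := by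
  simp [EuclideanSpace.inner_eq_star_dotProduct]

theorem inner_toLp_cross_self_right (u v : EuclideanSpace ℝ (Fin 3)) :
    ⟪WithLp.toLp 2 (u.ofLp ⨯₃ v.ofLp), v⟫ = 0 := by
  simp [EuclideanSpace.inner_eq_star_dotProduct]

/-- Let `z̃ : ℝ² → ℝ` be differentiable and strictly positive at `(x, y)`,
let `f̃ > 0` and `(x₀, y₀) ∈ ℝ²`, and let
`𝐱(u, v) = z̃(u, v)·((u − x₀)/f̃, (v − y₀)/f̃, 1)`. Set `z = log ∘ z̃`, `x̃ = x − x₀`,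
`ỹ = y − y₀`, `d = √(f̃²((∂ₓz)² + (∂_y z)²) + (1 + x̃·∂ₓz + ỹ·∂_y z)²)` at `(x, y)`, and
`n = (1/d)·(f̃·∂ₓz, f̃·∂_y z, −(1 + x̃·∂ₓz + ỹ·∂_y z))`. Then `n` is a unit vector
orthogonal to both tangent vectors `𝐱ₓ` and `𝐱_y`, and
`n = −(f̃²/(z̃(x,y)²·d))·(𝐱ₓ × 𝐱_y)`.
(Here `zt = z̃`, `ft = f̃`, `xt = x̃`, `yt = ỹ`.) -/
theorem perspective_normal_field (zt : ℝ × ℝ → ℝ) (x y x₀ y₀ ft : ℝ) (hft : 0 < ft)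
    (hz : DifferentiableAt ℝ zt (x, y)) (hpos : 0 < zt (x, y))
    (X : ℝ × ℝ → EuclideanSpace ℝ (Fin 3))
    (hX : X = fun p => (WithLp.equiv 2 (Fin 3 → ℝ)).symm
      ![zt p * ((p.1 - x₀) / ft), zt p * ((p.2 - y₀) / ft), zt p])
    (Xx Xy : EuclideanSpace ℝ (Fin 3))
    (hXx : Xx = fderiv ℝ X (x, y) (1, 0)) (hXy : Xy = fderiv ℝ X (x, y) (0, 1))
    (z : ℝ × ℝ → ℝ) (hzdef : z = Real.log ∘ zt)
    (zx zy : ℝ) (hzx : zx = fderiv ℝ z (x, y) (1, 0)) (hzy : zy = fderiv ℝ z (x, y) (0, 1))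
    (xt yt : ℝ) (hxt : xt = x - x₀) (hyt : yt = y - y₀)
    (d : ℝ) (hd : d = Real.sqrt (ft ^ 2 * (zx ^ 2 + zy ^ 2) + (1 + xt * zx + yt * zy) ^ 2))
    (n : EuclideanSpace ℝ (Fin 3))
    (hn : n = (1 / d) • (WithLp.equiv 2 (Fin 3 → ℝ)).symm
      ![ft * zx, ft * zy, -(1 + xt * zx + yt * zy)]) :
    ‖n‖ = 1 ∧ ⟪n, Xx⟫ = 0 ∧ ⟪n, Xy⟫ = 0 ∧
    n = (-(ft ^ 2 / (zt (x, y) ^ 2 * d))) •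
      (WithLp.equiv 2 (Fin 3 → ℝ)).symm (crossProduct Xx Xy) := by
  change X = perspectiveSurface zt x₀ y₀ ft at hX
  change n = (1 / d) • perspectiveNormal ft xt yt zx zy at hn
  rw [← norm_perspectiveNormal] at hd
  have hXx' : Xx = (zt (x, y) / ft) • !₂[1 + xt * zx, yt * zx, ft * zx] := by
    rw [hXx, hX, fderiv_perspectiveSurface_apply hz hpos.ne' hft.ne', ← hzdef, ← hzx, hxt, hyt]
    simp
  have hXy' : Xy = (zt (x, y) / ft) • !₂[xt * zy, 1 + yt * zy, ft * zy] := by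
    rw [hXy, hX, fderiv_perspectiveSurface_apply hz hpos.ne' hft.ne', ← hzdef, ← hzy, hxt, hyt]
    simp
  have hcross : n = (-(ft ^ 2 / (zt (x, y) ^ 2 * d))) • WithLp.toLp 2 (Xx.ofLp ⨯₃ Xy.ofLp) := by
    rw [hXx', hXy', cross_perspectiveTangents, hn, smul_smul]
    congr 1
    field_simp
  refine ⟨?_, ?_, ?_, hcross⟩
  · rw [hn, hd, one_div]
    exact norm_smul_inv_norm (perspectiveNormal_ne_zero hft.ne' xt yt zx zy)
  · rw [hcross, inner_smul_left, inner_toLp_cross_self_left, mul_zero]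
  · rw [hcross, inner_smul_left, inner_toLp_cross_self_right, mul_zero]
end
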